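/- arXiv:1802.03684 — 3 statements merged into one kernel-verified Lean document; each statement's English description precedes it below -/
import Mathlib

section
/- For any smooth function u on the open unit ball of ℝᵈ, any real α, and any x in the ball with ‖x‖ < 1, the identity (1−‖x‖²)^{−α} ∇·[ (I − x xᵀ)(1−‖x‖²)^{α} ∇u ](x) = Δu(x) − (x·∇)(x·∇u)(x) − (2α + d) (x·∇u)(x) holds; equivalently, the weighted divergence-form operator −(1−‖x‖²)^{−α} ∇·(I − x xᵀ)(1−‖x‖²)^{α}∇ coincides with −Δ + ∇·x(2α + x·∇) − 2αd on smooth functions. -/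
/-- Partial derivative `∂f/∂xᵢ` of a function on `ℝᵈ` (Euclidean space). -/
noncomputable def pd {d : ℕ} (i : Fin d) (f : EuclideanSpace ℝ (Fin d) → ℝ)
    (x : EuclideanSpace ℝ (Fin d)) : ℝ :=
  fderiv ℝ f x (EuclideanSpace.single i 1)

set_option maxHeartbeats 1000000

theorem pd_def {d : ℕ} (i : Fin d) (f : EuclideanSpace ℝ (Fin d) → ℝ)
    (x : EuclideanSpace ℝ (Fin d)) :
    fderiv ℝ f x (EuclideanSpace.single i 1) = pd i f x := rfl

/-- On the open unit ball, for smooth `u` and real `α`,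
`(1−‖x‖²)^{−α} ∇·[(I − x xᵀ)(1−‖x‖²)^{α} ∇u](x)
  = Δu(x) − (x·∇)(x·∇u)(x) − (2α + d)(x·∇u)(x)`.
The `i`-th component of `(I − x xᵀ)∇u` is `∂ᵢu − xᵢ (x·∇u)`. -/
theorem sturm_liouville_operator_expansion (d : ℕ) (α : ℝ)
    (u : EuclideanSpace ℝ (Fin d) → ℝ) (hu : ContDiff ℝ (⊤ : ℕ∞) u)
    (x : EuclideanSpace ℝ (Fin d)) (hx : ‖x‖ < 1) :
    (1 - ‖x‖ ^ 2) ^ (-α) *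
      (∑ i : Fin d, pd i (fun y =>
        (1 - ‖y‖ ^ 2) ^ α * (pd i u y - y i * ∑ k : Fin d, y k * pd k u y)) x) =
    (∑ i : Fin d, pd i (pd i u) x)
      - (∑ i : Fin d, x i * pd i (fun y => ∑ k : Fin d, y k * pd k u y) x)
      - (2 * α + d) * (∑ i : Fin d, x i * pd i u x) := by
  classical
  set S : EuclideanSpace ℝ (Fin d) → ℝ := fun y => ∑ k : Fin d, y k * pd k u y with hSdef
  have hpd : ∀ k : Fin d, ContDiff ℝ (⊤ : ℕ∞) (pd k u) := by
    intro k
    have h1 : ContDiff ℝ (⊤ : ℕ∞) (fderiv ℝ u) := hu.fderiv_right (by simp)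
    exact ((ContinuousLinearMap.apply ℝ ℝ (EuclideanSpace.single k 1) :
        (EuclideanSpace ℝ (Fin d) →L[ℝ] ℝ) →L[ℝ] ℝ).contDiff.comp h1 :)
  have hS : ContDiff ℝ (⊤ : ℕ∞) S := ContDiff.sum fun k _ =>
    ((EuclideanSpace.proj (𝕜 := ℝ) k).contDiff).mul (hpd k)
  set t : ℝ := 1 - ‖x‖ ^ 2 with ht
  have ht0 : (0:ℝ) < t := by
    have : ‖x‖ ^ 2 < 1 := by nlinarith [norm_nonneg x]
    simp [ht]; linarith
  have hnorm : ‖x‖ ^ 2 = ∑ i, x i * x i := by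
    rw [EuclideanSpace.norm_eq, Real.sq_sqrt (by positivity)]
    exact Finset.sum_congr rfl fun i _ => by rw [Real.norm_eq_abs, sq_abs, sq]
  have hxsq : (∑ i, x i * x i) = 1 - t := by rw [← hnorm, ht]; ring
  -- derivative of the weight
  have hN : HasFDerivAt (fun y : EuclideanSpace ℝ (Fin d) => 1 - ‖y‖ ^ 2)
      ((0 : EuclideanSpace ℝ (Fin d) →L[ℝ] ℝ) - (2 • (innerSL ℝ x))) x :=
    (hasFDerivAt_const (1:ℝ) x).sub (hasStrictFDerivAt_norm_sq x).hasFDerivAt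
  have hw : HasFDerivAt (fun y : EuclideanSpace ℝ (Fin d) => (1 - ‖y‖ ^ 2) ^ α)
      ((α * t ^ (α - 1)) • ((0 : EuclideanSpace ℝ (Fin d) →L[ℝ] ℝ) - (2 • (innerSL ℝ x)))) x := by
    have hr : HasDerivAt (fun s : ℝ => s ^ α) (α * t ^ (α - 1)) t :=
      Real.hasDerivAt_rpow_const (Or.inl ht0.ne')
    exact hr.comp_hasFDerivAt x hN
  have key : ∀ i : Fin d,
      pd i (fun y =>
        (1 - ‖y‖ ^ 2) ^ α * (pd i u y - y i * ∑ k : Fin d, y k * pd k u y)) x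
      = (-2 * (α * t ^ (α - 1))) * (x i * pd i u x)
        + (2 * (α * t ^ (α - 1)) * (∑ k : Fin d, x k * pd k u x)) * (x i * x i)
        + t ^ α * pd i (pd i u) x
        + (-(t ^ α * (∑ k : Fin d, x k * pd k u x)))
        + (-(t ^ α)) * (x i * pd i S x) := by
    intro i
    have hv : HasFDerivAt (fun y : EuclideanSpace ℝ (Fin d) =>
        pd i u y - y i * ∑ k : Fin d, y k * pd k u y)
        (fderiv ℝ (pd i u) x -
          (x i • fderiv ℝ S x + S x • EuclideanSpace.proj (𝕜 := ℝ) i)) x :=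
      (((hpd i).differentiable (by simp) x).hasFDerivAt).sub
        (((EuclideanSpace.proj (𝕜 := ℝ) i).hasFDerivAt).mul
          ((hS.differentiable (by simp) x).hasFDerivAt))
    have hprod : HasFDerivAt (fun y : EuclideanSpace ℝ (Fin d) =>
        (1 - ‖y‖ ^ 2) ^ α * (pd i u y - y i * ∑ k : Fin d, y k * pd k u y))
        (((1 - ‖x‖ ^ 2) ^ α) •
            (fderiv ℝ (pd i u) x -
              (x i • fderiv ℝ S x + S x • EuclideanSpace.proj (𝕜 := ℝ) i))
          + (pd i u x - x i * S x) •
            ((α * t ^ (α - 1)) • ((0 : EuclideanSpace ℝ (Fin d) →L[ℝ] ℝ) - (2 • (innerSL ℝ x)))))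
        x := hw.mul hv
    rw [show (pd i (fun y =>
        (1 - ‖y‖ ^ 2) ^ α * (pd i u y - y i * ∑ k : Fin d, y k * pd k u y)) x)
      = fderiv ℝ (fun y =>
          (1 - ‖y‖ ^ 2) ^ α * (pd i u y - y i * ∑ k : Fin d, y k * pd k u y)) x
          (EuclideanSpace.single i 1) from rfl, hprod.fderiv]
    simp only [ContinuousLinearMap.add_apply, ContinuousLinearMap.sub_apply,
            ContinuousLinearMap.smul_apply, ContinuousLinearMap.zero_apply,
            ContinuousLinearMap.coe_smul', Pi.smul_apply, smul_eq_mul, innerSL_apply_apply,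
            EuclideanSpace.inner_single_right, PiLp.proj_apply,
            EuclideanSpace.single_apply, pd_def]
    simp only [hSdef, if_true, starRingEnd_apply, star_trivial, nsmul_eq_mul, Nat.cast_ofNat, mul_one, smul_eq_mul]
    rw [← ht]
    ring
  rw [show (∑ i : Fin d, pd i (fun y =>
        (1 - ‖y‖ ^ 2) ^ α * (pd i u y - y i * ∑ k : Fin d, y k * pd k u y)) x)
      = ∑ i : Fin d, ((-2 * (α * t ^ (α - 1))) * (x i * pd i u x)
        + (2 * (α * t ^ (α - 1)) * (∑ k : Fin d, x k * pd k u x)) * (x i * x i)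
        + t ^ α * pd i (pd i u) x
        + (-(t ^ α * (∑ k : Fin d, x k * pd k u x)))
        + (-(t ^ α)) * (x i * pd i S x))
    from Finset.sum_congr rfl fun i _ => key i]
  simp only [Finset.sum_add_distrib, ← Finset.mul_sum, Finset.sum_const,
    Finset.card_univ, Fintype.card_fin, nsmul_eq_mul]
  rw [hxsq]
  have h1 : t ^ (-α) * t ^ α = 1 := by
    rw [← Real.rpow_add ht0]; simp
  have h2 : t ^ (-α) * t ^ (α - 1) * t = 1 := by
    rw [← Real.rpow_add ht0]
    have : -α + (α - 1) = -1 := by ring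
    rw [this, Real.rpow_neg_one]
    field_simp
  linear_combination ((-2) * α * (∑ i, x i * pd i u x)) * h2 +
    ((∑ i, pd i (pd i u) x) - (d : ℝ) * (∑ i, x i * pd i u x)
      - (∑ i, x i * pd i S x)) * h1
end

section
/- For any smooth function u on the open unit ball of ℝᵈ, any real α, and any x with ‖x‖ < 1, one has −(1−‖x‖²)^{−α} ∇·[ (I − x xᵀ)(1−‖x‖²)^{α} ∇u ](x) = −(1−‖x‖²)^{−α} ∇·[ (1−‖x‖²)^{α+1} ∇u ](x) − Σ_{1 ≤ j < i ≤ d} (D_{ij}² u)(x), where D_{ij} = x_j ∂_{x_i} − x_i ∂_{x_j}. -/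
/-- The angular derivative `D_{ij} f = x_j ∂_{x_i} f − x_i ∂_{x_j} f`. -/
noncomputable def Dang {d : ℕ} (i j : Fin d) (f : EuclideanSpace ℝ (Fin d) → ℝ)
    (x : EuclideanSpace ℝ (Fin d)) : ℝ :=
  x j * pd i f x - x i * pd j f x

namespace SLSplitAux

open Finset

variable {d : ℕ}

lemma sum_Iio_swap (g : Fin d → Fin d → ℝ) :
    ∑ i, ∑ j ∈ Finset.Iio i, g j i = ∑ i, ∑ j ∈ Finset.Ioi i, g i j := by
  rw [Finset.sum_sigma', Finset.sum_sigma']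
  apply Finset.sum_nbij' (i := fun p => ⟨p.2, p.1⟩) (j := fun p => ⟨p.2, p.1⟩) <;>
    simp [Finset.mem_sigma]

lemma sum_Iio_pair (g : Fin d → Fin d → ℝ) :
    ∑ i, ∑ j ∈ Finset.Iio i, (g i j + g j i)
      = (∑ i, ∑ j, g i j) - ∑ i, g i i := by
  have huniv : ∀ i : Fin d, Finset.Iio i ∪ Finset.Ioi i = Finset.univ.erase i := by
    intro i; ext j
    simp [Finset.mem_erase, lt_or_lt_iff_ne]
  have hdisj : ∀ i : Fin d, Disjoint (Finset.Iio i) (Finset.Ioi i) := by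
    intro i
    simp [Finset.disjoint_left]
    intro a ha; exact le_of_lt ha
  simp only [Finset.sum_add_distrib]
  rw [sum_Iio_swap g]
  rw [← Finset.sum_add_distrib]
  have : ∀ i : Fin d, (∑ j ∈ Finset.Iio i, g i j) + ∑ j ∈ Finset.Ioi i, g i j
      = (∑ j, g i j) - g i i := by
    intro i
    rw [← Finset.sum_union (hdisj i), huniv i, Finset.sum_erase_eq_sub (Finset.mem_univ i)]
  rw [Finset.sum_congr rfl fun i _ => this i, Finset.sum_sub_distrib]

lemma algebra_main (d : ℕ) (α w : ℝ) (hw : w ≠ 0) (xc P : Fin d → ℝ)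
    (Q : Fin d → Fin d → ℝ) (hN : ∑ i, (xc i)^2 = 1 - w) :
    -(∑ i, (α * w⁻¹ * (-2 * xc i) * (P i - xc i * (∑ k, xc k * P k))
        + (Q i i - ((∑ k, xc k * P k) + xc i * (P i + ∑ k, xc k * Q i k)))))
    = -(∑ i, ((α + 1) * (-2 * xc i) * P i + w * Q i i))
      - ∑ i, ∑ j ∈ Finset.Iio i,
          (xc j * (xc j * Q i i - xc i * Q i j - P j)
            - xc i * (xc j * Q j i + P i - xc i * Q j j)) := by
  set S := ∑ k, xc k * P k with hS
  set TrQ := ∑ i, Q i i with hTrQ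
  set DQ := ∑ i, xc i * ∑ k, xc k * Q i k with hDQ
  have hx2S : ∑ i, xc i * (xc i * S) = (1 - w) * S := by
    calc ∑ i, xc i * (xc i * S) = ∑ i, (xc i)^2 * S := by
          exact Finset.sum_congr rfl fun i _ => by ring
      _ = (1 - w) * S := by rw [← Finset.sum_mul, hN]
  have A1 : ∑ i, (α * w⁻¹ * (-2 * xc i) * (P i - xc i * S)
        + (Q i i - (S + xc i * (P i + ∑ k, xc k * Q i k))))
      = (-2*α*w⁻¹) * S + (2*α*w⁻¹) * ((1-w)*S) + TrQ - (d:ℝ) * S - S - DQ := by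
    rw [Finset.sum_congr rfl (fun i (_ : i ∈ Finset.univ) =>
      show α * w⁻¹ * (-2 * xc i) * (P i - xc i * S)
          + (Q i i - (S + xc i * (P i + ∑ k, xc k * Q i k)))
        = (-2*α*w⁻¹) * (xc i * P i) + (2*α*w⁻¹) * (xc i * (xc i * S)) + Q i i
            - S - xc i * P i - xc i * (∑ k, xc k * Q i k) from by ring)]
    simp only [Finset.sum_add_distrib, Finset.sum_sub_distrib, ← Finset.mul_sum,
      Finset.sum_const, Finset.card_univ, Fintype.card_fin, nsmul_eq_mul, hx2S,
      ← hS, ← hTrQ, ← hDQ]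
  have A2 : ∑ i, ((α + 1) * (-2 * xc i) * P i + w * Q i i)
      = (-2*(α+1)) * S + w * TrQ := by
    rw [Finset.sum_congr rfl (fun i (_ : i ∈ Finset.univ) =>
      show (α + 1) * (-2 * xc i) * P i + w * Q i i
        = (-2*(α+1)) * (xc i * P i) + w * Q i i from by ring)]
    simp only [Finset.sum_add_distrib, ← Finset.mul_sum, ← hS, ← hTrQ]
  have A3 : ∑ i, ∑ j ∈ Finset.Iio i,
        (xc j * (xc j * Q i i - xc i * Q i j - P j)
          - xc i * (xc j * Q j i + P i - xc i * Q j j))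
      = ((1-w) * TrQ - (d:ℝ) * S - DQ) - (-S) := by
    rw [Finset.sum_congr rfl (fun i (_ : i ∈ Finset.univ) => Finset.sum_congr rfl
        (fun j (_ : j ∈ Finset.Iio i) =>
      show xc j * (xc j * Q i i - xc i * Q i j - P j)
            - xc i * (xc j * Q j i + P i - xc i * Q j j)
          = ((fun i j => (xc j)^2 * Q i i - xc j * P j - xc i * (xc j * Q i j)) i j)
            + ((fun i j => (xc j)^2 * Q i i - xc j * P j - xc i * (xc j * Q i j)) j i)
        from by ring)),
      sum_Iio_pair (fun i j => (xc j)^2 * Q i i - xc j * P j - xc i * (xc j * Q i j))]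
    congr 1
    · rw [Finset.sum_congr rfl (fun i (_ : i ∈ Finset.univ) =>
          show ∑ j, ((xc j)^2 * Q i i - xc j * P j - xc i * (xc j * Q i j))
            = (1-w) * Q i i - S - xc i * ∑ j, xc j * Q i j from by
          rw [Finset.sum_sub_distrib, Finset.sum_sub_distrib, ← Finset.sum_mul, hN,
            ← Finset.mul_sum])]
      rw [Finset.sum_sub_distrib, Finset.sum_sub_distrib, ← Finset.mul_sum,
        Finset.sum_const, Finset.card_univ, Fintype.card_fin, nsmul_eq_mul, ← hDQ]
    · rw [Finset.sum_congr rfl (fun i (_ : i ∈ Finset.univ) =>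
          show (xc i)^2 * Q i i - xc i * P i - xc i * (xc i * Q i i)
            = -(xc i * P i) from by ring)]
      rw [Finset.sum_neg_distrib, ← hS]
  rw [A1, A2, A3]
  have hinv : w⁻¹ * w = 1 := inv_mul_cancel₀ hw
  linear_combination (2*α*S)*hinv

lemma pd_eq {f : EuclideanSpace ℝ (Fin d) → ℝ} {L : EuclideanSpace ℝ (Fin d) →L[ℝ] ℝ}
    {x : EuclideanSpace ℝ (Fin d)} (i : Fin d)
    (h : HasFDerivAt f L x) : pd i f x = L (EuclideanSpace.single i 1) := by
  rw [pd, h.fderiv]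

lemma contDiff_pd {u : EuclideanSpace ℝ (Fin d) → ℝ} (hu : ContDiff ℝ (⊤ : ℕ∞) u) (k : Fin d) :
    ContDiff ℝ (⊤ : ℕ∞) (pd k u) := by
  have := (hu.fderiv_right (m := (⊤ : ℕ∞)) (by simp)).clm_apply
    (contDiff_const (c := EuclideanSpace.single k (1:ℝ)))
  exact this

section keys
variable {u : EuclideanSpace ℝ (Fin d) → ℝ} {x : EuclideanSpace ℝ (Fin d)}

lemma key2 (hu : ContDiff ℝ (⊤ : ℕ∞) u) (hw0 : (0:ℝ) < 1 - ‖x‖ ^ 2) (α : ℝ) (i : Fin d) :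
    pd i (fun y => (1 - ‖y‖ ^ 2) ^ α * pd i u y) x
      = α * (1 - ‖x‖ ^ 2) ^ (α - 1) * (-2 * x i) * pd i u x
        + (1 - ‖x‖ ^ 2) ^ α * pd i (pd i u) x := by
  have Hns : HasFDerivAt (fun y : EuclideanSpace ℝ (Fin d) => ‖y‖ ^ 2)
      ((2:ℝ) • (innerSL ℝ x)) x := by
    have h := (hasStrictFDerivAt_norm_sq x).hasFDerivAt
    simpa [two_smul] using h
  have Hw : HasFDerivAt (fun y : EuclideanSpace ℝ (Fin d) => 1 - ‖y‖ ^ 2)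
      (-((2:ℝ) • (innerSL ℝ x))) x := Hns.const_sub 1
  have Hr : HasFDerivAt (fun y : EuclideanSpace ℝ (Fin d) => (1 - ‖y‖ ^ 2) ^ α)
      ((α * (1 - ‖x‖ ^ 2) ^ (α - 1)) • -((2:ℝ) • (innerSL ℝ x))) x :=
    Hw.rpow_const (Or.inl (ne_of_gt hw0))
  have Hp : HasFDerivAt (pd i u) (fderiv ℝ (pd i u) x) x :=
    ((contDiff_pd hu i).differentiable (by simp) x).hasFDerivAt
  have H := Hr.fun_mul Hp
  rw [pd_eq i H]
  have : fderiv ℝ (pd i u) x (EuclideanSpace.single i 1) = pd i (pd i u) x := rfl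
  simp only [ContinuousLinearMap.add_apply, ContinuousLinearMap.smul_apply,
    ContinuousLinearMap.neg_apply, smul_eq_mul, innerSL_apply_apply, this,
    EuclideanSpace.inner_single_right, starRingEnd_apply, star_trivial, mul_one]
  ring

set_option maxHeartbeats 1000000 in
lemma key1 (hu : ContDiff ℝ (⊤ : ℕ∞) u) (hw0 : (0:ℝ) < 1 - ‖x‖ ^ 2) (α : ℝ) (i : Fin d) :
    pd i (fun y => (1 - ‖y‖ ^ 2) ^ α * (pd i u y - y i * ∑ k, y k * pd k u y)) x
      = α * (1 - ‖x‖ ^ 2) ^ (α - 1) * (-2 * x i)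
          * (pd i u x - x i * ∑ k, x k * pd k u x)
        + (1 - ‖x‖ ^ 2) ^ α * (pd i (pd i u) x
            - ((∑ k, x k * pd k u x)
              + x i * (pd i u x + ∑ k, x k * pd i (pd k u) x))) := by
  have Hns : HasFDerivAt (fun y : EuclideanSpace ℝ (Fin d) => ‖y‖ ^ 2)
      ((2:ℝ) • (innerSL ℝ x)) x := by
    have h := (hasStrictFDerivAt_norm_sq x).hasFDerivAt
    simpa [two_smul] using h
  have Hw : HasFDerivAt (fun y : EuclideanSpace ℝ (Fin d) => 1 - ‖y‖ ^ 2)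
      (-((2:ℝ) • (innerSL ℝ x))) x := Hns.const_sub 1
  have Hr : HasFDerivAt (fun y : EuclideanSpace ℝ (Fin d) => (1 - ‖y‖ ^ 2) ^ α)
      ((α * (1 - ‖x‖ ^ 2) ^ (α - 1)) • -((2:ℝ) • (innerSL ℝ x))) x :=
    Hw.rpow_const (Or.inl (ne_of_gt hw0))
  have Hp : ∀ k : Fin d, HasFDerivAt (pd k u) (fderiv ℝ (pd k u) x) x :=
    fun k => ((contDiff_pd hu k).differentiable (by simp) x).hasFDerivAt
  have Hc : ∀ j : Fin d, HasFDerivAt (fun y : EuclideanSpace ℝ (Fin d) => (y j : ℝ))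
      ((EuclideanSpace.proj j : EuclideanSpace ℝ (Fin d) →L[ℝ] ℝ)) x := fun j => by
    exact (EuclideanSpace.proj (𝕜 := ℝ) (ι := Fin d) j).hasFDerivAt
  have HS : HasFDerivAt (fun y : EuclideanSpace ℝ (Fin d) => ∑ k, y k * pd k u y)
      (∑ k, (x k • fderiv ℝ (pd k u) x
        + pd k u x • (EuclideanSpace.proj k : EuclideanSpace ℝ (Fin d) →L[ℝ] ℝ))) x :=
    HasFDerivAt.fun_sum (fun k _ => (Hc k).fun_mul (Hp k))
  have H := Hr.fun_mul ((Hp i).fun_sub ((Hc i).fun_mul HS))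
  rw [pd_eq i H]
  have hQ : ∀ k : Fin d, fderiv ℝ (pd k u) x (EuclideanSpace.single i 1)
      = pd i (pd k u) x := fun k => rfl
  simp only [ContinuousLinearMap.add_apply, ContinuousLinearMap.sub_apply,
    ContinuousLinearMap.smul_apply, ContinuousLinearMap.neg_apply,
    ContinuousLinearMap.coe_sum', Finset.sum_apply, smul_eq_mul, innerSL_apply_apply, hQ,
    EuclideanSpace.inner_single_right, starRingEnd_apply, star_trivial, mul_one,
    PiLp.proj_apply, EuclideanSpace.single_apply]
  rw [Finset.sum_add_distrib]
  simp only [mul_ite, mul_one, mul_zero, Finset.sum_ite_eq', Finset.mem_univ, if_true]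
  ring

lemma key3 (hu : ContDiff ℝ (⊤ : ℕ∞) u) (i j : Fin d) (hij : j ≠ i) :
    Dang i j (Dang i j u) x
      = x j * (x j * pd i (pd i u) x - x i * pd i (pd j u) x - pd j u x)
        - x i * (x j * pd j (pd i u) x + pd i u x - x i * pd j (pd j u) x) := by
  have Hp : ∀ k : Fin d, HasFDerivAt (pd k u) (fderiv ℝ (pd k u) x) x :=
    fun k => ((contDiff_pd hu k).differentiable (by simp) x).hasFDerivAt
  have Hc : ∀ j : Fin d, HasFDerivAt (fun y : EuclideanSpace ℝ (Fin d) => (y j : ℝ))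
      ((EuclideanSpace.proj j : EuclideanSpace ℝ (Fin d) →L[ℝ] ℝ)) x := fun j => by
    exact (EuclideanSpace.proj (𝕜 := ℝ) (ι := Fin d) j).hasFDerivAt
  have HD : ∀ k : Fin d, pd k (Dang i j u) x
      = x j * pd k (pd i u) x + pd i u x * (if j = k then 1 else 0)
        - (x i * pd k (pd j u) x + pd j u x * (if i = k then 1 else 0)) := by
    intro k
    have H := ((Hc j).fun_mul (Hp i)).fun_sub ((Hc i).fun_mul (Hp j))
    have hfun : Dang i j u = fun y => y j * pd i u y - y i * pd j u y := rfl
    rw [hfun, pd_eq k H]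
    have hQ : ∀ m : Fin d, fderiv ℝ (pd m u) x (EuclideanSpace.single k 1)
        = pd k (pd m u) x := fun m => rfl
    simp only [ContinuousLinearMap.add_apply, ContinuousLinearMap.sub_apply,
      ContinuousLinearMap.smul_apply, smul_eq_mul, hQ, PiLp.proj_apply,
      EuclideanSpace.single_apply]
  rw [Dang, HD i, HD j]
  simp only [hij, Ne.symm hij, if_false, if_pos rfl, if_true, mul_zero, mul_one,
    add_zero, mul_ite]
  ring

end keys

end SLSplitAux

open SLSplitAux in
/-- On the open unit ball, for smooth `u` and real `α`,
`−(1−‖x‖²)^{−α} ∇·[(I − x xᵀ)(1−‖x‖²)^{α} ∇u](x)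
  = −(1−‖x‖²)^{−α} ∇·[(1−‖x‖²)^{α+1} ∇u](x) − Σ_{j<i} (D_{ij}² u)(x)`. -/
theorem sturm_liouville_operator_split (d : ℕ) (α : ℝ)
    (u : EuclideanSpace ℝ (Fin d) → ℝ) (hu : ContDiff ℝ (⊤ : ℕ∞) u)
    (x : EuclideanSpace ℝ (Fin d)) (hx : ‖x‖ < 1) :
    -((1 - ‖x‖ ^ 2) ^ (-α) *
      (∑ i : Fin d, pd i (fun y =>
        (1 - ‖y‖ ^ 2) ^ α * (pd i u y - y i * ∑ k : Fin d, y k * pd k u y)) x)) =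
    -((1 - ‖x‖ ^ 2) ^ (-α) *
      (∑ i : Fin d, pd i (fun y => (1 - ‖y‖ ^ 2) ^ (α + 1) * pd i u y) x))
      - ∑ i : Fin d, ∑ j ∈ Finset.Iio i, Dang i j (Dang i j u) x := by
  have hw0 : (0:ℝ) < 1 - ‖x‖ ^ 2 := by nlinarith [norm_nonneg x]
  have hN : ∑ i, (x i)^2 = 1 - (1 - ‖x‖^2) := by
    have h1 : ‖x‖^2 = ∑ i, (x i)^2 := by
      rw [EuclideanSpace.norm_eq, Real.sq_sqrt (by positivity)]
      exact Finset.sum_congr rfl fun i _ => sq_abs (x i)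
    rw [← h1]; ring
  have hA : (1-‖x‖^2) ^ (-α) * (1-‖x‖^2) ^ (α-1) = (1-‖x‖^2)⁻¹ := by
    rw [← Real.rpow_add hw0, show -α + (α-1) = -1 from by ring, Real.rpow_neg_one]
  have hB : (1-‖x‖^2) ^ (-α) * (1-‖x‖^2) ^ α = 1 := by
    rw [← Real.rpow_add hw0, show -α + α = 0 from by ring, Real.rpow_zero]
  have hC : (1-‖x‖^2) ^ (-α) * (1-‖x‖^2) ^ (α+1) = 1-‖x‖^2 := by
    rw [← Real.rpow_add hw0, show -α + (α+1) = 1 from by ring, Real.rpow_one]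
  rw [Finset.sum_congr rfl (fun i (_ : i ∈ Finset.univ) => key1 hu hw0 α i),
      Finset.sum_congr rfl (fun i (_ : i ∈ Finset.univ) => key2 hu hw0 (α+1) i),
      Finset.sum_congr rfl (fun i (_ : i ∈ Finset.univ) => Finset.sum_congr rfl
        (fun j hj => key3 hu i j (ne_of_lt (Finset.mem_Iio.mp hj))))]
  rw [show α + 1 - 1 = α from by ring]
  have hL : (1-‖x‖^2)^(-α) * ∑ i, (α * (1 - ‖x‖ ^ 2) ^ (α - 1) * (-2 * x i)
          * (pd i u x - x i * ∑ k, x k * pd k u x)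
        + (1 - ‖x‖ ^ 2) ^ α * (pd i (pd i u) x
            - ((∑ k, x k * pd k u x)
              + x i * (pd i u x + ∑ k, x k * pd i (pd k u) x))))
      = ∑ i, (α * (1-‖x‖^2)⁻¹ * (-2 * x i) * (pd i u x - x i * ∑ k, x k * pd k u x)
        + (pd i (pd i u) x - ((∑ k, x k * pd k u x)
            + x i * (pd i u x + ∑ k, x k * pd i (pd k u) x)))) := by
    rw [Finset.mul_sum]
    refine Finset.sum_congr rfl fun i _ => ?_
    linear_combination (α * (-2 * x i) * (pd i u x - x i * ∑ k, x k * pd k u x)) * hA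
      + (pd i (pd i u) x - ((∑ k, x k * pd k u x)
          + x i * (pd i u x + ∑ k, x k * pd i (pd k u) x))) * hB
  have hR : (1-‖x‖^2)^(-α) * ∑ i, ((α+1) * (1 - ‖x‖ ^ 2) ^ α * (-2 * x i) * pd i u x
        + (1 - ‖x‖ ^ 2) ^ (α+1) * pd i (pd i u) x)
      = ∑ i, ((α+1) * (-2 * x i) * pd i u x + (1-‖x‖^2) * pd i (pd i u) x) := by
    rw [Finset.mul_sum]
    refine Finset.sum_congr rfl fun i _ => ?_
    linear_combination ((α+1) * (-2 * x i) * pd i u x) * hB + (pd i (pd i u) x) * hC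
  rw [hL, hR]
  have halg := algebra_main d α (1-‖x‖^2) (ne_of_gt hw0) (fun i => x i)
    (fun i => pd i u x) (fun i j => pd i (pd j u) x) hN
  exact halg
end

section
/- For every ν > −1/2 and every z ≥ 0, the Bessel function of the first kind satisfies Poisson's integral representation: J_ν(z) = z^ν / (2^ν √π Γ(ν + 1/2)) · ∫_{−1}^{1} e^{izt} (1 − t²)^{ν − 1/2} dt. -/
/-- The Bessel function of the first kind of order `ν`, defined by its power series
`J_ν(z) = Σ_{m=0}^∞ (−1)^m / (m! Γ(m+ν+1)) (z/2)^{2m+ν}`. -/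
noncomputable def besselJ (ν z : ℝ) : ℝ :=
  ∑' m : ℕ, ((-1) ^ m / ((Nat.factorial m : ℝ) * Real.Gamma ((m : ℝ) + ν + 1))) *
    (z / 2) ^ (2 * (m : ℝ) + ν)

/-
Expand `exp (i z t)` in its power series and integrate term by term against the weight
`(1 - t²) ^ (ν - 1/2)`, integrable on `[-1, 1]` because `ν > -1/2`; on `[-1, 1]` the series is
dominated termwise by `|z| ^ n / n!` times the weight. The weight is even, so the odd moments
vanish, and the substitution `x = t²` turns the even moments into Beta integrals
`B(m + 1/2, ν + 1/2)`. Legendre's duplication formula, in the form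
`Γ(m + 1/2) = (2m)! √π / (4^m m!)`, then matches the resulting series with the series defining
`J_ν` term by term.
-/

open MeasureTheory Real Set intervalIntegral

theorem intervalIntegrable_one_sub_sq_rpow {p : ℝ} (hp : -1 < p) :
    IntervalIntegrable (fun t : ℝ => (1 - t ^ 2) ^ p) volume (-1) 1 := by
  have hsing : IntervalIntegrable (fun t : ℝ => (1 - t) ^ p) volume 0 1 := by
    simpa using ((intervalIntegrable_rpow' hp (a := 0) (b := 1)).comp_sub_left 1).symm
  have hright : IntervalIntegrable (fun t : ℝ => (1 - t ^ 2) ^ p) volume 0 1 := by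
    refine (hsing.mul_continuousOn (g := fun t : ℝ => (1 + t) ^ p) ?_).congr_uIoo fun t ht => ?_
    · refine ContinuousOn.rpow_const (by fun_prop) fun t ht => Or.inl ?_
      rw [uIcc_of_le zero_le_one] at ht
      linarith [ht.1]
    · rw [uIoo_of_le zero_le_one] at ht
      dsimp only
      rw [← mul_rpow (by linarith [ht.2]) (by linarith [ht.1])]
      ring_nf
  have hleft : IntervalIntegrable (fun t : ℝ => (1 - t ^ 2) ^ p) volume (-1) 0 := by
    simpa using ((IntervalIntegrable.iff_comp_neg).mp hright).symm
  exact hleft.trans hright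

theorem integral_neg_self_eq_integral_comp_neg_add {E : Type*} [NormedAddCommGroup E]
    [NormedSpace ℝ E] {g : ℝ → E} {a : ℝ} (ha : 0 ≤ a) (hg : IntervalIntegrable g volume (-a) a) :
    ∫ t in -a..a, g t = (∫ t in (0 : ℝ)..a, g (-t)) + ∫ t in (0 : ℝ)..a, g t := by
  rw [← integral_add_adjacent_intervals (b := 0) (hg.mono_set ?_) (hg.mono_set ?_),
    integral_comp_neg g, neg_zero]
  all_goals rw [uIcc_of_le (by linarith), uIcc_of_le (by linarith)]
  · exact Icc_subset_Icc le_rfl ha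
  · exact Icc_subset_Icc (by linarith) le_rfl

theorem hasSum_integral_cexp_mul {w : ℝ → ℝ} (hw : IntervalIntegrable w volume (-1) 1) (c : ℂ) :
    HasSum (fun n : ℕ => c ^ n / n.factorial * ((∫ t in (-1 : ℝ)..1, t ^ n * w t : ℝ) : ℂ))
      (∫ t in (-1 : ℝ)..1, Complex.exp (c * t) * (w t : ℂ)) := by
  have hterm (n : ℕ) : ∫ t in (-1 : ℝ)..1, (c * t) ^ n / n.factorial * (w t : ℂ) =
      c ^ n / n.factorial * ((∫ t in (-1 : ℝ)..1, t ^ n * w t : ℝ) : ℂ) := by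
    rw [← intervalIntegral.integral_ofReal, ← intervalIntegral.integral_const_mul]
    congr 1 with t
    push_cast
    ring
  simp only [← hterm]
  refine intervalIntegral.hasSum_integral_of_dominated_convergence
    (fun n t => ‖c‖ ^ n / n.factorial * ‖w t‖) (fun n => ?_) (fun n => ?_) ?_ ?_ ?_
  · have hpow : Continuous fun t : ℝ => (c * t) ^ n / n.factorial := by fun_prop
    exact hpow.aestronglyMeasurable.mul
      (Complex.continuous_ofReal.comp_aestronglyMeasurable hw.def'.1)
  · refine Filter.Eventually.of_forall fun t ht => ?_
    have ht1 : |t| ≤ 1 := by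
      rw [uIoc_of_le (by norm_num)] at ht
      exact abs_le.mpr ⟨ht.1.le, ht.2⟩
    simp only [norm_mul, norm_div, norm_pow, Complex.norm_real, Complex.norm_natCast]
    gcongr
    exact mul_le_of_le_one_right (norm_nonneg c) ht1
  · exact Filter.Eventually.of_forall fun t _ =>
      (Real.summable_pow_div_factorial ‖c‖).mul_right _
  · simp_rw [tsum_mul_right]
    exact hw.norm.const_mul _
  · refine Filter.Eventually.of_forall fun t _ => ?_
    rw [Complex.exp_eq_exp_ℂ]
    exact (NormedSpace.expSeries_div_hasSum_exp (c * t)).mul_right _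

theorem integral_pow_mul_of_even {w : ℝ → ℝ} (hw : IntervalIntegrable w volume (-1) 1)
    (hw_even : ∀ t, w (-t) = w t) (n : ℕ) :
    ∫ t in (-1 : ℝ)..1, t ^ n * w t = ((-1) ^ n + 1) * ∫ t in (0 : ℝ)..1, t ^ n * w t := by
  rw [integral_neg_self_eq_integral_comp_neg_add zero_le_one
    (hw.continuousOn_mul (continuous_pow n).continuousOn)]
  have hreflect (t : ℝ) : (-t) ^ n * w (-t) = (-1) ^ n * (t ^ n * w t) := by
    rw [neg_pow, hw_even, mul_assoc]
  simp only [hreflect, intervalIntegral.integral_const_mul]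
  ring

theorem hasSum_integral_cexp_mul_of_even {w : ℝ → ℝ} (hw : IntervalIntegrable w volume (-1) 1)
    (hw_even : ∀ t, w (-t) = w t) (c : ℂ) :
    HasSum (fun m : ℕ => c ^ (2 * m) / (2 * m).factorial *
        ((2 * ∫ t in (0 : ℝ)..1, t ^ (2 * m) * w t : ℝ) : ℂ))
      (∫ t in (-1 : ℝ)..1, Complex.exp (c * t) * (w t : ℂ)) := by
  have hodd (n : ℕ) (hn : n ∉ range (2 * ·)) :
      c ^ n / n.factorial * ((∫ t in (-1 : ℝ)..1, t ^ n * w t : ℝ) : ℂ) = 0 := by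
    have hn : Odd n := Nat.not_even_iff_odd.mp fun ⟨k, hk⟩ => hn ⟨k, by simp only; omega⟩
    rw [integral_pow_mul_of_even hw hw_even, hn.neg_one_pow]
    simp
  convert (Function.Injective.hasSum_iff (fun a b (h : 2 * a = 2 * b) => by omega) hodd).mpr
    (hasSum_integral_cexp_mul hw c) using 3 with m
  rw [Function.comp_apply, integral_pow_mul_of_even hw hw_even, (even_two_mul m).neg_one_pow]
  push_cast
  ring

theorem integral_rpow_mul_one_sub_rpow {a b : ℝ} (ha : 0 < a) (hb : 0 < b) :
    ∫ x in (0 : ℝ)..1, x ^ (a - 1) * (1 - x) ^ (b - 1) = Gamma a * Gamma b / Gamma (a + b) := by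
  have hcast : Complex.betaIntegral a b =
      ((∫ x in (0 : ℝ)..1, x ^ (a - 1) * (1 - x) ^ (b - 1) : ℝ) : ℂ) := by
    rw [Complex.betaIntegral, ← intervalIntegral.integral_ofReal]
    refine integral_congr fun x hx => ?_
    rw [uIcc_of_le zero_le_one] at hx
    push_cast [Complex.ofReal_cpow hx.1, Complex.ofReal_cpow (sub_nonneg.2 hx.2)]
    rfl
  have := ProbabilityTheory.beta_eq_betaIntegralReal a b ha hb
  rw [hcast, Complex.ofReal_re] at this
  exact this.symm

theorem integral_rpow_mul_one_sub_sq_rpow {a b : ℝ} (ha : 0 < a) (hb : 0 < b) :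
    ∫ t in (0 : ℝ)..1, t ^ (2 * a - 1) * (1 - t ^ 2) ^ (b - 1) =
      Gamma a * Gamma b / (2 * Gamma (a + b)) := by
  have hsq : (fun t : ℝ => t ^ 2) '' Ioo 0 1 = Ioo 0 1 := by
    refine Subset.antisymm ?_ fun x hx => ⟨√x, ?_, sq_sqrt hx.1.le⟩
    · rintro _ ⟨t, ht, rfl⟩
      exact ⟨pow_pos ht.1 2, by nlinarith [ht.1, ht.2]⟩
    · exact ⟨sqrt_pos.2 hx.1, (sqrt_lt_sqrt hx.1.le hx.2).trans_eq sqrt_one⟩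
  have hsubst : ∫ x in (0 : ℝ)..1, x ^ (a - 1) * (1 - x) ^ (b - 1) =
      2 * ∫ t in (0 : ℝ)..1, t ^ (2 * a - 1) * (1 - t ^ 2) ^ (b - 1) := by
    have hinj : InjOn (fun t : ℝ => t ^ 2) (Ioo 0 1) := fun s hs t ht h => by
      nlinarith [hs.1, ht.1]
    have himage := integral_image_eq_integral_abs_deriv_smul measurableSet_Ioo (f' := (2 * ·))
      (fun t _ => by simpa using (hasDerivAt_pow 2 t).hasDerivWithinAt) hinj
      fun x => x ^ (a - 1) * (1 - x) ^ (b - 1)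
    simp only [integral_of_le zero_le_one, integral_Ioc_eq_integral_Ioo]
    rw [← hsq, himage, hsq, ← MeasureTheory.integral_const_mul]
    refine setIntegral_congr_fun measurableSet_Ioo fun t (ht : t ∈ Ioo 0 1) => ?_
    have hpow : t * (t ^ 2) ^ (a - 1) = t ^ (2 * a - 1) := by
      rw [← rpow_natCast, ← rpow_mul ht.1.le, show 2 * a - 1 = 1 + (2 : ℕ) * (a - 1) by
        push_cast; ring, rpow_add ht.1, rpow_one]
    rw [smul_eq_mul, abs_of_pos (by linarith [ht.1] : (0 : ℝ) < 2 * t), ← hpow]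
    ring
  have := integral_rpow_mul_one_sub_rpow ha hb
  rw [hsubst] at this
  linear_combination this / 2

theorem two_mul_integral_pow_mul_one_sub_sq_rpow {ν : ℝ} (hν : -1 / 2 < ν) (m : ℕ) :
    2 * ∫ t in (0 : ℝ)..1, t ^ (2 * m) * (1 - t ^ 2) ^ (ν - 1 / 2) =
      Gamma (m + 1 / 2) * Gamma (ν + 1 / 2) / Gamma (m + ν + 1) := by
  have h := integral_rpow_mul_one_sub_sq_rpow (a := m + 1 / 2) (b := ν + 1 / 2) (by positivity)
    (by linarith)
  rw [show 2 * ((m : ℝ) + 1 / 2) - 1 = (2 * m : ℕ) by push_cast; ring,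
    show ν + 1 / 2 - 1 = ν - 1 / 2 by ring, show (m : ℝ) + 1 / 2 + (ν + 1 / 2) = m + ν + 1 by ring]
    at h
  simp only [rpow_natCast] at h
  rw [h]
  have hΓ : Gamma (m + ν + 1) ≠ 0 := (Gamma_pos_of_pos (by linarith [m.cast_nonneg (α := ℝ)])).ne'
  field_simp

theorem Gamma_nat_add_half_eq_factorial (m : ℕ) :
    Gamma (m + 1 / 2) = (2 * m).factorial * √π / (4 ^ m * m.factorial) := by
  have h := Gamma_mul_Gamma_add_half ((m : ℝ) + 1 / 2)
  rw [show (m : ℝ) + 1 / 2 + 1 / 2 = m + 1 by ring,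
    show 2 * ((m : ℝ) + 1 / 2) = (2 * m : ℕ) + 1 by push_cast; ring, Gamma_nat_eq_factorial,
    Gamma_nat_eq_factorial, show (1 : ℝ) - ((2 * m : ℕ) + 1) = -(2 * m : ℕ) by ring,
    rpow_neg zero_le_two, rpow_natCast, pow_mul] at h
  rw [eq_div_iff (by positivity), mul_left_comm, h]
  norm_num
  field_simp

theorem besselJ_term_eq {ν z : ℝ} (hν : -1 / 2 < ν) (hz : 0 ≤ z) (m : ℕ) :
    (-1) ^ m / (m.factorial * Gamma (m + ν + 1)) * (z / 2) ^ (2 * (m : ℝ) + ν) =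
      z ^ ν / (2 ^ ν * √π * Gamma (ν + 1 / 2)) *
        ((-1) ^ m * z ^ (2 * m) / (2 * m).factorial *
          (Gamma (m + 1 / 2) * Gamma (ν + 1 / 2) / Gamma (m + ν + 1))) := by
  have hsplit : (z / 2) ^ (2 * (m : ℝ) + ν) = ((z / 2) ^ 2) ^ m * (z / 2) ^ ν := by
    rcases m.eq_zero_or_pos with rfl | hm
    · simp
    have hm' : (1 : ℝ) ≤ m := by exact_mod_cast hm
    rw [add_comm, show 2 * (m : ℝ) = (2 * m : ℕ) by push_cast; ring,
      rpow_add_natCast' (by positivity) (by push_cast; linarith), pow_mul, mul_comm]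
  rw [hsplit, div_rpow hz zero_le_two, Gamma_nat_add_half_eq_factorial, ← pow_mul, div_pow,
    show (4 : ℝ) ^ m = 2 ^ (2 * m) by rw [pow_mul]; norm_num]
  have hΓν : Gamma (ν + 1 / 2) ≠ 0 := (Gamma_pos_of_pos (by linarith)).ne'
  have hΓm : Gamma (m + ν + 1) ≠ 0 := (Gamma_pos_of_pos (by linarith [m.cast_nonneg (α := ℝ)])).ne'
  -- `field_simp` would normalise the argument `ν + 1 / 2` and then no longer see `hΓν`
  generalize Gamma (ν + 1 / 2) = G at hΓν ⊢
  field_simp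

/-- Poisson's integral representation of the Bessel function: for
`ν > −1/2` and `z ≥ 0`,
`J_ν(z) = z^ν/(2^ν √π Γ(ν+1/2)) ∫_{−1}^1 e^{izt}(1−t²)^{ν−1/2} dt`. -/
theorem bessel_poisson_integral (ν z : ℝ) (hν : -1/2 < ν) (hz : 0 ≤ z) :
    ((besselJ ν z : ℝ) : ℂ) =
      ((z ^ ν / (2 ^ ν * Real.sqrt Real.pi * Real.Gamma (ν + 1/2)) : ℝ) : ℂ) *
        ∫ t in (-1 : ℝ)..1,
          Complex.exp (Complex.I * z * t) * (((1 - t ^ 2) ^ (ν - 1/2) : ℝ) : ℂ) := by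
  have hw := intervalIntegrable_one_sub_sq_rpow (p := ν - 1 / 2) (by linarith)
  have hsum := (hasSum_integral_cexp_mul_of_even hw (fun t => by rw [neg_sq])
    (Complex.I * z)).mul_left ((z ^ ν / (2 ^ ν * √π * Gamma (ν + 1 / 2)) : ℝ) : ℂ)
  rw [besselJ, Complex.ofReal_tsum, ← hsum.tsum_eq]
  congr 1 with m
  rw [two_mul_integral_pow_mul_one_sub_sq_rpow hν, besselJ_term_eq hν hz, mul_pow,
    pow_mul Complex.I, Complex.I_sq]
  push_cast
  ring
end
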